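/- Suppose Condition 1 holds. Then for every class distribution η ∈ Δ^K, the surrogate Bayes risk of the convolutional Fenchel–Young loss satisfies underline R_{L_{Ω_T}}(η) = E_{y∼η}[Ω_T(ρ(y))] − Ω_T(E_{y∼η}[ρ(y)]). -/

import Mathlib

open scoped BigOperators
noncomputable section

/-- Score/probability space: `ℝ^ϱ` with Euclidean structure. -/
abbrev E (ϱ : ℕ) : Type := EuclideanSpace ℝ (Fin ϱ)

/-- Euclidean dot product `⟨θ, p⟩`. -/
def dot {ϱ : ℕ} (θ p : E ϱ) : ℝ := ∑ i, θ i * p i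

/-- Fenchel conjugate of an extended-real-valued function:
`Ω^*(θ) = sup_{p ∈ dom Ω} ⟨θ, p⟩ − Ω(p)`. -/
def conj {ϱ : ℕ} (f : E ϱ → EReal) (θ : E ϱ) : EReal :=
  ⨆ p ∈ {q : E ϱ | f q ≠ ⊤}, (((dot θ p : ℝ) : EReal) - f p)

/-- Convexity for extended-real-valued functions. -/
def ErealConvex {ϱ : ℕ} (f : E ϱ → EReal) : Prop :=
  ∀ p q : E ϱ, ∀ a b : ℝ, 0 ≤ a → 0 ≤ b → a + b = 1 →
    f (a • p + b • q) ≤ (a : EReal) * f p + (b : EReal) * f q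

/-- `T(p) = − min_{t ∈ Ŷ} ⟨p, ℓ^ρ(t)⟩`. -/
def Tfun {ϱ N : ℕ} (ℓρ : Fin N → E ϱ) (p : E ϱ) : ℝ := - ⨅ t, dot p (ℓρ t)

/-- The convolutional negentropy `Ω_T = Ω + T`. -/
def OmegaT {ϱ N : ℕ} (Ω : E ϱ → EReal) (ℓρ : Fin N → E ϱ) (p : E ϱ) : EReal :=
  Ω p + ((Tfun ℓρ p : ℝ) : EReal)

/-- Loss-matrix action: `L^ρ π = Σ_t π_t ℓ^ρ(t)`. -/
def Lrho {ϱ N : ℕ} (ℓρ : Fin N → E ϱ) (π : Fin N → ℝ) : E ϱ :=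
  WithLp.toLp 2 (fun i => ∑ t, π t * ℓρ t i)

/-- Condition 1: Ω proper convex l.s.c., `conv(ρ(𝒴)) ⊆ dom Ω`, `dom Ω^* = ℝ^ϱ`. -/
def Condition1 {ϱ K : ℕ} (Ω : E ϱ → EReal) (ρ : Fin K → E ϱ) : Prop :=
  (∀ p, Ω p ≠ ⊥) ∧ (∃ p, Ω p ≠ ⊤) ∧ ErealConvex Ω ∧ LowerSemicontinuous Ω ∧
  (convexHull ℝ (Set.range ρ) ⊆ {p : E ϱ | Ω p ≠ ⊤}) ∧ (∀ θ : E ϱ, conj Ω θ ≠ ⊤)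

/-- `Π(θ) = argmin_{π ∈ Δ^N} Ω^*(θ + L^ρ π)`. -/
def Pii {ϱ N : ℕ} (Ω : E ϱ → EReal) (ℓρ : Fin N → E ϱ) (θ : E ϱ) : Set (Fin N → ℝ) :=
  {π | π ∈ stdSimplex ℝ (Fin N) ∧
       ∀ π' ∈ stdSimplex ℝ (Fin N), conj Ω (θ + Lrho ℓρ π) ≤ conj Ω (θ + Lrho ℓρ π')}

/-- The convolutional Fenchel–Young loss `L_{Ω_T}(θ, y) = Ω_T^*(θ) + Ω_T(ρ(y)) − ⟨θ, ρ(y)⟩`. -/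
def LossFY {ϱ N K : ℕ} (Ω : E ϱ → EReal) (ρ : Fin K → E ϱ) (ℓρ : Fin N → E ϱ)
    (θ : E ϱ) (y : Fin K) : ℝ :=
  (conj (OmegaT Ω ℓρ) θ).toReal + (OmegaT Ω ℓρ (ρ y)).toReal - dot θ (ρ y)

/-- Surrogate risk of the convolutional Fenchel–Young loss. -/
def RsurL {ϱ N K : ℕ} (Ω : E ϱ → EReal) (ρ : Fin K → E ϱ) (ℓρ : Fin N → E ϱ)
    (θ : E ϱ) (η : Fin K → ℝ) : ℝ :=
  ∑ y, η y * LossFY Ω ρ ℓρ θ y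

/-- Surrogate regret of the convolutional Fenchel–Young loss. -/
def RegSur {ϱ N K : ℕ} (Ω : E ϱ → EReal) (ρ : Fin K → E ϱ) (ℓρ : Fin N → E ϱ)
    (θ : E ϱ) (η : Fin K → ℝ) : ℝ :=
  RsurL Ω ρ ℓρ θ η - ⨅ θ' : E ϱ, RsurL Ω ρ ℓρ θ' η

/-- Target regret of a discrete prediction `t` under target loss `ℓ`. -/
def RegTar {N K : ℕ} (ℓ : Fin N → Fin K → ℝ) (t : Fin N) (η : Fin K → ℝ) : ℝ :=
  (∑ y, η y * ℓ t y) - ⨅ t' : Fin N, ∑ y, η y * ℓ t' y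

/-- Real-valued version of a finite Fenchel conjugate. -/
def starFn {ϱ : ℕ} (f : E ϱ → EReal) (θ : E ϱ) : ℝ := (conj f θ).toReal

section DotLemmas
variable {ϱ : ℕ}

lemma dot_eq_inner (θ p : E ϱ) : dot θ p = (inner ℝ θ p : ℝ) := by
  simp [dot, PiLp.inner_apply, RCLike.inner_apply, mul_comm]

lemma dot_smul_left (r : ℝ) (w p : E ϱ) : dot (r • w) p = r * dot w p := by
  simp [dot, PiLp.smul_apply, smul_eq_mul, Finset.mul_sum, mul_assoc]

lemma dot_convex (p q v : E ϱ) (a b : ℝ) :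
    dot (a • p + b • q) v = a * dot p v + b * dot q v := by
  simp only [dot, PiLp.add_apply, PiLp.smul_apply, smul_eq_mul, Finset.mul_sum,
    ← Finset.sum_add_distrib]
  exact Finset.sum_congr rfl fun i _ => by ring

lemma continuous_dot_left (v : E ϱ) : Continuous fun p : E ϱ => dot p v := by
  have : (fun p : E ϱ => dot p v) = fun p : E ϱ => (inner ℝ p v : ℝ) := by
    funext p; exact dot_eq_inner p v
  rw [this]
  exact continuous_id.inner continuous_const
end DotLemmas

section TfunLemmas
variable {ϱ N : ℕ} (ℓρ : Fin N → E ϱ)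

lemma tfun_neg_le (p : E ϱ) (t : Fin N) : - dot p (ℓρ t) ≤ Tfun ℓρ p := by
  have : (⨅ s, dot p (ℓρ s)) ≤ dot p (ℓρ t) := ciInf_le (Finite.bddBelow_range _) t
  simpa [Tfun] using neg_le_neg this

lemma tfun_convex (hN : 0 < N) (p q : E ϱ) (a b : ℝ) (ha : 0 ≤ a) (hb : 0 ≤ b) :
    Tfun ℓρ (a • p + b • q) ≤ a * Tfun ℓρ p + b * Tfun ℓρ q := by
  haveI : Nonempty (Fin N) := ⟨⟨0, hN⟩⟩
  have h : ∀ t, a * (⨅ s, dot p (ℓρ s)) + b * (⨅ s, dot q (ℓρ s))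
      ≤ dot (a • p + b • q) (ℓρ t) := by
    intro t
    have h1 : (⨅ s, dot p (ℓρ s)) ≤ dot p (ℓρ t) := ciInf_le (Finite.bddBelow_range _) t
    have h2 : (⨅ s, dot q (ℓρ s)) ≤ dot q (ℓρ t) := ciInf_le (Finite.bddBelow_range _) t
    rw [dot_convex]
    have := mul_le_mul_of_nonneg_left h1 ha
    have := mul_le_mul_of_nonneg_left h2 hb
    linarith
  have h2 := le_ciInf h
  simp only [Tfun]
  linarith

lemma tfun_continuous (hN : 0 < N) : Continuous (Tfun ℓρ) := by
  haveI : Nonempty (Fin N) := ⟨⟨0, hN⟩⟩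
  have heq : Tfun ℓρ
      = fun p => - Finset.univ.inf' Finset.univ_nonempty (fun t => dot p (ℓρ t)) := by
    funext p
    rw [Finset.inf'_univ_eq_ciInf]
    rfl
  have : Continuous fun p : E ϱ =>
      Finset.univ.inf' Finset.univ_nonempty (fun t => dot p (ℓρ t)) := by
    rw [continuous_iff_continuousAt]
    intro x
    exact ContinuousAt.finset_inf'_apply _ fun t _ => (continuous_dot_left (ℓρ t)).continuousAt
  rw [heq]
  exact this.neg
end TfunLemmas

section MoreDot
variable {ϱ : ℕ}

lemma dot_comm (θ p : E ϱ) : dot θ p = dot p θ :=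
  Finset.sum_congr rfl fun i _ => mul_comm _ _

lemma dot_add_left (θ ψ p : E ϱ) : dot (θ + ψ) p = dot θ p + dot ψ p := by
  simp only [dot, PiLp.add_apply, add_mul, Finset.sum_add_distrib]
end MoreDot

section OmegaTLemmas
variable {ϱ N : ℕ} {Ω : E ϱ → EReal} {ℓρ : Fin N → E ϱ}

lemma omegaT_ne_top {p : E ϱ} (hp : Ω p ≠ ⊤) : OmegaT Ω ℓρ p ≠ ⊤ :=
  (EReal.add_lt_top hp (EReal.coe_ne_top _)).ne

lemma omegaT_ne_bot {p : E ϱ} (hbot : Ω p ≠ ⊥) : OmegaT Ω ℓρ p ≠ ⊥ := by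
  unfold OmegaT
  rcases eq_or_ne (Ω p) ⊤ with h | h
  · rw [h, EReal.top_add_coe]; simp
  · rw [← EReal.coe_toReal h hbot, ← EReal.coe_add]; exact EReal.coe_ne_bot _

lemma omegaT_eq_coe {p : E ϱ} (hp : Ω p ≠ ⊤) (hbot : Ω p ≠ ⊥) :
    OmegaT Ω ℓρ p = (((Ω p).toReal + Tfun ℓρ p : ℝ) : EReal) := by
  unfold OmegaT
  rw [EReal.coe_add, EReal.coe_toReal hp hbot]

lemma omegaT_dom {p : E ϱ} (hp : OmegaT Ω ℓρ p ≠ ⊤) : Ω p ≠ ⊤ := by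
  intro h
  exact hp (by rw [OmegaT, h, EReal.top_add_coe])
end OmegaTLemmas

section ConjLemmas
variable {ϱ : ℕ}

lemma conj_le_coe {g : E ϱ → EReal} {θ : E ϱ} {r : ℝ} (hbot : ∀ p, g p ≠ ⊥)
    (h : ∀ p, g p ≠ ⊤ → dot θ p - (g p).toReal ≤ r) :
    conj g θ ≤ (r : EReal) := by
  apply iSup₂_le
  intro p hp
  rw [← EReal.coe_toReal hp (hbot p), ← EReal.coe_sub, EReal.coe_le_coe_iff]
  exact h p hp

lemma coe_sub_le_conj {g : E ϱ → EReal} {θ p : E ϱ} (hp : g p ≠ ⊤) :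
    ((dot θ p : ℝ) : EReal) - g p ≤ conj g θ :=
  le_iSup₂ (f := fun q (_ : q ∈ {q : E ϱ | g q ≠ ⊤}) => ((dot θ q : ℝ) : EReal) - g q) p hp

lemma conj_ne_bot {g : E ϱ → EReal} {θ p0 : E ϱ} (h0 : g p0 ≠ ⊤) (h0' : g p0 ≠ ⊥) :
    conj g θ ≠ ⊥ := by
  have h1 : ((dot θ p0 - (g p0).toReal : ℝ) : EReal) ≤ conj g θ := by
    rw [EReal.coe_sub, EReal.coe_toReal h0 h0']
    exact coe_sub_le_conj h0
  intro hb
  rw [hb, le_bot_iff] at h1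
  exact EReal.coe_ne_bot _ h1
end ConjLemmas

section ConjOmegaT
variable {ϱ N : ℕ} {Ω : E ϱ → EReal} {ℓρ : Fin N → E ϱ}

lemma conj_omegaT_ne_top (hN : 0 < N) (hbot : ∀ p, Ω p ≠ ⊥)
    (hconjΩ : ∀ θ : E ϱ, conj Ω θ ≠ ⊤) (θ : E ϱ) :
    conj (OmegaT Ω ℓρ) θ ≠ ⊤ := by
  set t0 : Fin N := ⟨0, hN⟩
  have hle : conj (OmegaT Ω ℓρ) θ ≤ conj Ω (θ + ℓρ t0) := by
    apply iSup₂_le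
    intro p hp
    have hΩp : Ω p ≠ ⊤ := omegaT_dom hp
    rw [omegaT_eq_coe hΩp (hbot p), ← EReal.coe_sub]
    have hstep : dot θ p - ((Ω p).toReal + Tfun ℓρ p) ≤ dot (θ + ℓρ t0) p - (Ω p).toReal := by
      have h1 : - dot p (ℓρ t0) ≤ Tfun ℓρ p := tfun_neg_le ℓρ p t0
      rw [dot_add_left]
      have : dot (ℓρ t0) p = dot p (ℓρ t0) := dot_comm _ _
      linarith
    calc ((dot θ p - ((Ω p).toReal + Tfun ℓρ p) : ℝ) : EReal)
        ≤ ((dot (θ + ℓρ t0) p - (Ω p).toReal : ℝ) : EReal) := by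
          exact_mod_cast hstep
      _ = ((dot (θ + ℓρ t0) p : ℝ) : EReal) - Ω p := by
          rw [EReal.coe_sub, EReal.coe_toReal hΩp (hbot p)]
      _ ≤ conj Ω (θ + ℓρ t0) := coe_sub_le_conj hΩp
  exact fun h => hconjΩ (θ + ℓρ t0) (top_le_iff.mp (h ▸ hle))
end ConjOmegaT

section Epigraph
variable {ϱ N : ℕ} {Ω : E ϱ → EReal} {ℓρ : Fin N → E ϱ}

lemma S_convex (hN : 0 < N) (hbot : ∀ p, Ω p ≠ ⊥) (hconv : ErealConvex Ω) :
    Convex ℝ {x : E ϱ × ℝ | OmegaT Ω ℓρ x.1 ≤ (x.2 : EReal)} := by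
  rintro ⟨p, s⟩ hp ⟨q, t⟩ hq a b ha hb hab
  simp only [Set.mem_setOf_eq] at hp hq ⊢
  have hpt : Ω p ≠ ⊤ := by
    intro h
    rw [OmegaT, h, EReal.top_add_coe] at hp
    exact (EReal.coe_ne_top s) (top_le_iff.mp hp)
  have hqt : Ω q ≠ ⊤ := by
    intro h
    rw [OmegaT, h, EReal.top_add_coe] at hq
    exact (EReal.coe_ne_top t) (top_le_iff.mp hq)
  rw [omegaT_eq_coe hpt (hbot p), EReal.coe_le_coe_iff] at hp
  rw [omegaT_eq_coe hqt (hbot q), EReal.coe_le_coe_iff] at hq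
  have hpoint : (a • (p, s) + b • (q, t) : E ϱ × ℝ) = (a • p + b • q, a * s + b * t) := rfl
  rw [hpoint]
  have hΩ := hconv p q a b ha hb hab
  rw [← EReal.coe_toReal hpt (hbot p), ← EReal.coe_toReal hqt (hbot q),
    ← EReal.coe_mul, ← EReal.coe_mul, ← EReal.coe_add] at hΩ
  have hT := tfun_convex ℓρ hN p q a b ha hb
  calc OmegaT Ω ℓρ (a • p + b • q)
      = Ω (a • p + b • q) + ((Tfun ℓρ (a • p + b • q) : ℝ) : EReal) := rfl
    _ ≤ ((a * (Ω p).toReal + b * (Ω q).toReal : ℝ) : EReal)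
        + ((a * Tfun ℓρ p + b * Tfun ℓρ q : ℝ) : EReal) :=
        add_le_add hΩ (by exact_mod_cast hT)
    _ = ((a * (Ω p).toReal + b * (Ω q).toReal + (a * Tfun ℓρ p + b * Tfun ℓρ q) : ℝ) : EReal) :=
        (EReal.coe_add _ _).symm
    _ ≤ ((a * s + b * t : ℝ) : EReal) := by
        rw [EReal.coe_le_coe_iff]
        have h1 := mul_le_mul_of_nonneg_left hp ha
        have h2 := mul_le_mul_of_nonneg_left hq hb
        nlinarith
  
lemma S_closed (hN : 0 < N) (hbot : ∀ p, Ω p ≠ ⊥) (hlsc : LowerSemicontinuous Ω) :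
    IsClosed {x : E ϱ × ℝ | OmegaT Ω ℓρ x.1 ≤ (x.2 : EReal)} := by
  have hT : Continuous fun p : E ϱ => ((Tfun ℓρ p : ℝ) : EReal) :=
    continuous_coe_real_ereal.comp (tfun_continuous ℓρ hN)
  have hg : LowerSemicontinuous (OmegaT Ω ℓρ) := by
    apply LowerSemicontinuous.add' hlsc hT.lowerSemicontinuous
    intro x
    exact EReal.continuousAt_add (Or.inr (EReal.coe_ne_bot _)) (Or.inr (EReal.coe_ne_top _))
  have hcl := hg.isClosed_epigraph
  have : IsClosed ((fun x : E ϱ × ℝ => ((x.1 : E ϱ), (x.2 : EReal))) ⁻¹'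
      {p : E ϱ × EReal | OmegaT Ω ℓρ p.1 ≤ p.2}) :=
    hcl.preimage (continuous_fst.prodMk (continuous_coe_real_ereal.comp continuous_snd))
  exact this
end Epigraph

section Separation
variable {ϱ : ℕ}

lemma exists_theta (g : E ϱ → EReal) (hbot : ∀ p, g p ≠ ⊥)
    (hconv : Convex ℝ {x : E ϱ × ℝ | g x.1 ≤ (x.2 : EReal)})
    (hclosed : IsClosed {x : E ϱ × ℝ | g x.1 ≤ (x.2 : EReal)})
    (pbar : E ϱ) (hpbar : g pbar ≠ ⊤) (ε : ℝ) (hε : 0 < ε) :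
    ∃ (θ : E ϱ) (u' : ℝ), (∀ p, g p ≠ ⊤ → dot θ p - (g p).toReal ≤ u') ∧
      u' - dot θ pbar < -(g pbar).toReal + ε := by
  set S := {x : E ϱ × ℝ | g x.1 ≤ (x.2 : EReal)} with hS
  set v := (g pbar).toReal with hv
  have hgpbar : g pbar = (v : EReal) := (EReal.coe_toReal hpbar (hbot pbar)).symm
  have hnotS : ((pbar, v - ε) : E ϱ × ℝ) ∉ S := by
    simp only [hS, Set.mem_setOf_eq, hgpbar, EReal.coe_le_coe_iff]
    linarith
  obtain ⟨f, u, hfS, hfx⟩ := geometric_hahn_banach_closed_point hconv hclosed hnotS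
  set c := f ((0 : E ϱ), (1 : ℝ)) with hc
  have hsplit : ∀ (p : E ϱ) (t : ℝ), f (p, t) = f (p, 0) + t * c := by
    intro p t
    have h1 : ((p, t) : E ϱ × ℝ) = (p, 0) + t • ((0 : E ϱ), (1 : ℝ)) := by
      simp [Prod.ext_iff]
    rw [h1, map_add, map_smul, smul_eq_mul]
  have hmem : ((pbar, v) : E ϱ × ℝ) ∈ S := by
    simp only [hS, Set.mem_setOf_eq, hgpbar, le_refl]
  have hcneg : c < 0 := by
    have h1 := hfS _ hmem
    rw [hsplit] at h1 hfx
    nlinarith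
  have hcne : c ≠ 0 := hcneg.ne
  obtain ⟨w, hw⟩ : ∃ w : E ϱ, ∀ p : E ϱ, dot w p = f (p, 0) := by
    refine ⟨(InnerProductSpace.toDual ℝ (E ϱ)).symm
      (f.comp (ContinuousLinearMap.inl ℝ (E ϱ) ℝ)), fun p => ?_⟩
    rw [dot_eq_inner, InnerProductSpace.toDual_symm_apply]
    simp
  refine ⟨(-c⁻¹) • w, -u / c, ?_, ?_⟩
  · intro p hp
    have hmemp : ((p, (g p).toReal) : E ϱ × ℝ) ∈ S := by
      simp only [hS, Set.mem_setOf_eq, EReal.coe_toReal hp (hbot p), le_refl]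
    have h1 := hfS _ hmemp
    rw [hsplit, ← hw] at h1
    rw [dot_smul_left]
    have hcinv : (0 : ℝ) ≤ -c⁻¹ := by
      have : c⁻¹ < 0 := inv_lt_zero.mpr hcneg
      linarith
    have h2 := mul_le_mul_of_nonneg_left h1.le hcinv
    have h3 : -c⁻¹ * (dot w p + (g p).toReal * c) = -c⁻¹ * dot w p - (g p).toReal := by
      field_simp
      ring
    have hdiv : -u / c = -c⁻¹ * u := by field_simp
    rw [hdiv]
    linarith
  · rw [hsplit, ← hw] at hfx
    rw [dot_smul_left]
    have hcinv : (0 : ℝ) < -c⁻¹ := by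
      have : c⁻¹ < 0 := inv_lt_zero.mpr hcneg
      linarith
    have h2 := mul_lt_mul_of_pos_left hfx hcinv
    have h3 : -c⁻¹ * (dot w pbar + (v - ε) * c) = -c⁻¹ * dot w pbar - (v - ε) := by
      field_simp
      ring
    have hdiv : -u / c = -c⁻¹ * u := by field_simp
    rw [hdiv]
    linarith
end Separation


def RsurL' {ϱ N K : ℕ} (Ω : E ϱ → EReal) (ρ : Fin K → E ϱ) (ℓρ : Fin N → E ϱ)
    (θ : E ϱ) (η : Fin K → ℝ) : ℝ :=
  ∑ y, η y * ((conj (OmegaT Ω ℓρ) θ).toReal + (OmegaT Ω ℓρ (ρ y)).toReal - dot θ (ρ y))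

theorem main_thm
    {K N ϱ : ℕ} (hK : 0 < K) (hN : 0 < N) (hϱ : 0 < ϱ)
    (Ω : E ϱ → EReal) (ρ : Fin K → E ϱ) (ℓρ : Fin N → E ϱ)
    (hcond : (∀ p, Ω p ≠ ⊥) ∧ (∃ p, Ω p ≠ ⊤) ∧ ErealConvex Ω ∧ LowerSemicontinuous Ω ∧
      (convexHull ℝ (Set.range ρ) ⊆ {p : E ϱ | Ω p ≠ ⊤}) ∧ (∀ θ : E ϱ, conj Ω θ ≠ ⊤)) :
    ∀ η ∈ stdSimplex ℝ (Fin K),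
      (⨅ θ : E ϱ, RsurL' Ω ρ ℓρ θ η)
        = (∑ y, η y * (OmegaT Ω ℓρ (ρ y)).toReal)
          - (OmegaT Ω ℓρ (∑ y, η y • ρ y)).toReal := by
  obtain ⟨hbot, hproper, hconvΩ, hlsc, hdom, hconj⟩ := hcond
  intro η hη
  obtain ⟨hη0, hη1⟩ := hη
  set g : E ϱ → EReal := OmegaT Ω ℓρ with hgdef
  have hgbot : ∀ p, g p ≠ ⊥ := fun p => omegaT_ne_bot (hbot p)
  set pbar : E ϱ := ∑ y, η y • ρ y with hpbardef
  have hpbar_mem : pbar ∈ convexHull ℝ (Set.range ρ) := by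
    have h := Finset.centerMass_mem_convexHull (Finset.univ) (fun i _ => hη0 i)
      (by rw [hη1]; norm_num) (fun i _ => Set.mem_range_self (f := ρ) i)
    rwa [Finset.centerMass_eq_of_sum_1 _ _ hη1] at h
  have hΩpbar : Ω pbar ≠ ⊤ := hdom hpbar_mem
  have hgpbar_top : g pbar ≠ ⊤ := omegaT_ne_top hΩpbar
  have hgpbar_bot : g pbar ≠ ⊥ := hgbot pbar
  set v : ℝ := (g pbar).toReal with hvdef
  have hgpbar : g pbar = (v : EReal) := (EReal.coe_toReal hgpbar_top hgpbar_bot).symm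
  set B : ℝ := ∑ y, η y * (g (ρ y)).toReal with hBdef
  have hconjtop : ∀ θ : E ϱ, conj g θ ≠ ⊤ :=
    fun θ => conj_omegaT_ne_top hN hbot hconj θ
  have hconjbot : ∀ θ : E ϱ, conj g θ ≠ ⊥ :=
    fun θ => conj_ne_bot hgpbar_top hgpbar_bot
  have hdotsum : ∀ θ : E ϱ, dot θ pbar = ∑ y, η y * dot θ (ρ y) := by
    intro θ
    rw [hpbardef, dot_eq_inner, inner_sum]
    exact Finset.sum_congr rfl fun y _ => by
      rw [real_inner_smul_right, dot_eq_inner]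
  have hRsur : ∀ θ : E ϱ, RsurL' Ω ρ ℓρ θ η = (conj g θ).toReal + B - dot θ pbar := by
    intro θ
    unfold RsurL'
    have hterm : ∀ y, η y * ((conj g θ).toReal + (g (ρ y)).toReal - dot θ (ρ y))
        = η y * (conj g θ).toReal + η y * (g (ρ y)).toReal - η y * dot θ (ρ y) :=
      fun y => by ring
    simp only [← hgdef, hterm]
    rw [Finset.sum_sub_distrib, Finset.sum_add_distrib, ← Finset.sum_mul, hη1, one_mul,
      hdotsum θ, hBdef]
  -- lower bound for all θ
  have hlb : ∀ θ : E ϱ, B - v ≤ RsurL' Ω ρ ℓρ θ η := by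
    intro θ
    rw [hRsur θ]
    have h1 : ((dot θ pbar : ℝ) : EReal) - g pbar ≤ conj g θ := coe_sub_le_conj hgpbar_top
    rw [hgpbar, ← EReal.coe_sub, ← EReal.coe_toReal (hconjtop θ) (hconjbot θ),
      EReal.coe_le_coe_iff] at h1
    linarith
  have hbdd : BddBelow (Set.range fun θ : E ϱ => RsurL' Ω ρ ℓρ θ η) := by
    refine ⟨B - v, ?_⟩
    rintro x ⟨θ, rfl⟩
    exact hlb θ
  apply le_antisymm
  · -- inf ≤ B - v
    apply le_of_forall_pos_le_add
    intro ε hε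
    obtain ⟨θ, u', h1, h2⟩ := exists_theta g hgbot
      (S_convex hN hbot hconvΩ) (S_closed hN hbot hlsc) pbar hgpbar_top ε hε
    have hconj_le : conj g θ ≤ (u' : EReal) := conj_le_coe hgbot h1
    have hG : (conj g θ).toReal ≤ u' := by
      have := EReal.toReal_le_toReal hconj_le (hconjbot θ) (EReal.coe_ne_top _)
      rwa [EReal.toReal_coe] at this
    have hstep : RsurL' Ω ρ ℓρ θ η ≤ B - v + ε := by
      rw [hRsur θ]
      linarith
    exact le_trans (ciInf_le hbdd θ) hstep
  · exact le_ciInf hlb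

/-- Under Condition 1, the surrogate Bayes risk of the convolutional Fenchel–Young loss
satisfies `underline R_{L_{Ω_T}}(η) = E_{y∼η}[Ω_T(ρ(y))] − Ω_T(E_{y∼η}[ρ(y)])`. -/
theorem bayes_risk_of_convolutional_FY_loss
    {K N ϱ : ℕ} (hK : 0 < K) (hN : 0 < N) (hϱ : 0 < ϱ)
    (Ω : E ϱ → EReal) (ρ : Fin K → E ϱ) (ℓρ : Fin N → E ϱ)
    (hcond : Condition1 Ω ρ) :
    ∀ η ∈ stdSimplex ℝ (Fin K),
      (⨅ θ : E ϱ, RsurL Ω ρ ℓρ θ η)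
        = (∑ y, η y * (OmegaT Ω ℓρ (ρ y)).toReal)
          - (OmegaT Ω ℓρ (∑ y, η y • ρ y)).toReal := by
  have h := main_thm hK hN hϱ Ω ρ ℓρ hcond
  intro η hη
  have hr : (⨅ θ : E ϱ, RsurL Ω ρ ℓρ θ η) = ⨅ θ : E ϱ, RsurL' Ω ρ ℓρ θ η := rfl
  rw [hr]
  exact h η hη
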